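/- arXiv:2204.05913 — 2 statements merged into one kernel-verified Lean document; each statement's English description precedes it below -/
import Mathlib

section
/- For pure octonions a, b, x, the associator satisfies {a,x,b} = (1/2) x*(a*b) + ⟨a,x⟩b - ⟨b,x⟩a, where {a,x,b} = (ax)b - a(xb). -/
/-- An octonion algebra over `k`: an 8-dimensional unital (not necessarily associative)
`k`-algebra with a nondegenerate multiplicative quadratic form `N`. -/
structure OctonionAlgebra (k : Type) [Field k] (A : Type) [AddCommGroup A] [Module k A] where
  mul : A → A → A
  e : A
  N : A → k
  add_mul' : ∀ a b c : A, mul (a + b) c = mul a c + mul b c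
  mul_add' : ∀ a b c : A, mul a (b + c) = mul a b + mul a c
  smul_mul' : ∀ (t : k) (a b : A), mul (t • a) b = t • mul a b
  mul_smul' : ∀ (t : k) (a b : A), mul a (t • b) = t • mul a b
  one_mul' : ∀ a : A, mul e a = a
  mul_one' : ∀ a : A, mul a e = a
  dim_eq : Module.finrank k A = 8
  N_smul : ∀ (t : k) (a : A), N (t • a) = t ^ 2 * N a
  polar_add_left : ∀ a b c : A,
    N (a + b + c) - N (a + b) - N c = (N (a + c) - N a - N c) + (N (b + c) - N b - N c)
  polar_smul_left : ∀ (t : k) (a b : A),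
    N (t • a + b) - N (t • a) - N b = t * (N (a + b) - N a - N b)
  nondeg : ∀ a : A, (∀ b : A, N (a + b) - N a - N b = 0) → a = 0
  N_mul : ∀ a b : A, N (mul a b) = N a * N b

namespace OctonionAlgebra

variable {k : Type} [Field k] {A : Type} [AddCommGroup A] [Module k A]

/-- The bilinear form associated to the norm: `⟨x,y⟩ = N(x+y) - N(x) - N(y)`. -/
def inner (O : OctonionAlgebra k A) (x y : A) : k := O.N (x + y) - O.N x - O.N y

/-- The standard involution `x̄ = ⟨x,e⟩e - x`. -/
def conj (O : OctonionAlgebra k A) (x : A) : A := O.inner x O.e • O.e - x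

/-- The Malcev product `a*b = ab - ba`. -/
def malcev (O : OctonionAlgebra k A) (a b : A) : A := O.mul a b - O.mul b a

/-- The associator `{a,x,b} = (ax)b - a(xb)`. -/
def assoc (O : OctonionAlgebra k A) (a x b : A) : A :=
  O.mul (O.mul a x) b - O.mul a (O.mul x b)

/-- The standard derivation `D_{a,b} = [L_a,L_b] + [L_a,R_b] + [R_a,R_b]`, as a function. -/
def D (O : OctonionAlgebra k A) (a b x : A) : A :=
  O.mul a (O.mul b x) - O.mul b (O.mul a x)
  + O.mul a (O.mul x b) - O.mul (O.mul a x) b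
  + O.mul (O.mul x b) a - O.mul (O.mul x a) b

end OctonionAlgebra

/-! Testing against every `c`, with `c * x` the Malcev product: for pure `a, b` the exchange
identities of the composition algebra give `⟨{a,x,b}, c⟩ = ⟨ab, c * x⟩ + ⟨a,x⟩⟨b,c⟩ - ⟨b,x⟩⟨a,c⟩`,
while for pure `x` left Malcev multiplication by `x` is adjoint to right Malcev multiplication by
`x`, and `a * b = 2ab + ⟨a,b⟩e` pairs with the pure octonion `c * x` as `2ab` does. -/

namespace OctonionAlgebra

variable {k : Type} [Field k] {A : Type} [AddCommGroup A] [Module k A]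
variable (O : OctonionAlgebra k A)

lemma inner_comm (x y : A) : O.inner x y = O.inner y x := by
  unfold inner; rw [add_comm]; ring

lemma inner_add_left (a b c : A) : O.inner (a + b) c = O.inner a c + O.inner b c :=
  O.polar_add_left a b c

lemma inner_smul_left (t : k) (a b : A) : O.inner (t • a) b = t * O.inner a b :=
  O.polar_smul_left t a b

lemma inner_add_right (a b c : A) : O.inner a (b + c) = O.inner a b + O.inner a c := by
  rw [O.inner_comm, O.inner_add_left, O.inner_comm b, O.inner_comm c]

lemma inner_neg_left (a b : A) : O.inner (-a) b = -O.inner a b := by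
  rw [← neg_one_smul k a, O.inner_smul_left]; ring

lemma inner_sub_left (a b c : A) : O.inner (a - b) c = O.inner a c - O.inner b c := by
  rw [sub_eq_add_neg, O.inner_add_left, O.inner_neg_left]; ring

lemma inner_sub_right (a b c : A) : O.inner a (b - c) = O.inner a b - O.inner a c := by
  rw [O.inner_comm, O.inner_sub_left, O.inner_comm b, O.inner_comm c]

lemma eq_zero_of_forall_inner_eq_zero {d : A} (h : ∀ c : A, O.inner d c = 0) : d = 0 :=
  O.nondeg d h

lemma N_add (a b : A) : O.N (a + b) = O.N a + O.N b + O.inner a b := by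
  unfold inner; ring

lemma mul_sub (a b c : A) : O.mul a (b - c) = O.mul a b - O.mul a c := by
  rw [sub_eq_add_neg, ← neg_one_smul k c, O.mul_add', O.mul_smul', neg_one_smul,
    ← sub_eq_add_neg]

lemma sub_mul (a b c : A) : O.mul (a - b) c = O.mul a c - O.mul b c := by
  rw [sub_eq_add_neg, ← neg_one_smul k b, O.add_mul', O.smul_mul', neg_one_smul,
    ← sub_eq_add_neg]

lemma inner_mul_mul_left (u v w : A) :
    O.inner (O.mul u v) (O.mul u w) = O.N u * O.inner v w := by
  have h := O.N_mul u (v + w)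
  rw [O.mul_add', O.N_add, O.N_add, O.N_mul, O.N_mul] at h
  linear_combination h

lemma inner_mul_mul_right (u w s : A) :
    O.inner (O.mul u s) (O.mul w s) = O.inner u w * O.N s := by
  have h := O.N_mul (u + w) s
  rw [O.add_mul', O.N_add, O.N_add, O.N_mul, O.N_mul] at h
  linear_combination h

lemma inner_mul_mul_add_inner_mul_mul_swap_left (u v w z : A) :
    O.inner (O.mul u v) (O.mul w z) + O.inner (O.mul w v) (O.mul u z)
      = O.inner u w * O.inner v z := by
  have h := O.inner_mul_mul_left (u + w) v z
  rw [O.add_mul', O.add_mul', O.N_add] at h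
  simp only [O.inner_add_left, O.inner_add_right, O.inner_mul_mul_left] at h
  linear_combination h

lemma inner_mul_mul_add_inner_mul_mul_swap_right (u v w z : A) :
    O.inner (O.mul u v) (O.mul w z) + O.inner (O.mul u z) (O.mul w v)
      = O.inner u w * O.inner v z := by
  have h := O.inner_mul_mul_right u w (v + z)
  rw [O.mul_add', O.mul_add', O.N_add] at h
  simp only [O.inner_add_left, O.inner_add_right, O.inner_mul_mul_right] at h
  linear_combination h

lemma inner_mul_eq_left (u v w : A) :
    O.inner (O.mul u v) w = O.inner u O.e * O.inner v w - O.inner v (O.mul u w) := by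
  have h := O.inner_mul_mul_add_inner_mul_mul_swap_left u v O.e w
  rw [O.one_mul', O.one_mul'] at h
  linear_combination h

lemma inner_mul_eq_right (u v w : A) :
    O.inner (O.mul u v) w = O.inner u w * O.inner v O.e - O.inner u (O.mul w v) := by
  have h := O.inner_mul_mul_add_inner_mul_mul_swap_right u v w O.e
  rw [O.mul_one', O.mul_one'] at h
  linear_combination h

lemma inner_mul_of_inner_left_e_eq_zero {u : A} (hu : O.inner u O.e = 0) (v w : A) :
    O.inner (O.mul u v) w = -O.inner v (O.mul u w) := by
  rw [O.inner_mul_eq_left, hu, zero_mul, zero_sub]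

lemma inner_mul_of_inner_right_e_eq_zero {v : A} (hv : O.inner v O.e = 0) (u w : A) :
    O.inner (O.mul u v) w = -O.inner u (O.mul w v) := by
  rw [O.inner_mul_eq_right, hv, mul_zero, zero_sub]

lemma inner_malcev_e (u v : A) : O.inner (O.malcev u v) O.e = 0 := by
  rw [malcev, O.inner_sub_left, O.inner_mul_eq_right, O.inner_mul_eq_right, O.one_mul',
    O.one_mul', O.inner_comm v u]
  ring

lemma mul_self (x : A) : O.mul x x = O.inner x O.e • x - O.N x • O.e := by
  rw [← sub_eq_zero]
  refine O.eq_zero_of_forall_inner_eq_zero fun c => ?_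
  have hxe := O.inner_mul_mul_right O.e c x
  rw [O.one_mul'] at hxe
  rw [O.inner_sub_left, O.inner_sub_left, O.inner_smul_left, O.inner_smul_left,
    O.inner_mul_eq_right, hxe]
  ring

lemma mul_add_mul_swap (a b : A) :
    O.mul a b + O.mul b a
      = O.inner a O.e • b + O.inner b O.e • a - O.inner a b • O.e := by
  have h : O.mul (a + b) (a + b) = O.mul a a + O.mul a b + (O.mul b a + O.mul b b) := by
    rw [O.add_mul', O.mul_add', O.mul_add']
  rw [O.mul_self, O.mul_self, O.mul_self, O.N_add, O.inner_add_left] at h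
  linear_combination (norm := module) -h

lemma inner_malcev_of_inner_e_eq_zero {a b w : A} (ha : O.inner a O.e = 0)
    (hb : O.inner b O.e = 0) (hw : O.inner w O.e = 0) :
    O.inner (O.malcev a b) w = 2 * O.inner (O.mul a b) w := by
  have hsum := congrArg (O.inner · w) (O.mul_add_mul_swap a b)
  simp only [ha, hb, zero_smul, zero_add, zero_sub, O.inner_neg_left, O.inner_smul_left,
    O.inner_add_left, O.inner_comm O.e w, hw, mul_zero, neg_zero] at hsum
  rw [malcev, O.inner_sub_left]
  linear_combination -hsum

lemma inner_malcev_left_of_inner_e_eq_zero {x : A} (hx : O.inner x O.e = 0) (m c : A) :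
    O.inner (O.malcev x m) c = O.inner m (O.malcev c x) := by
  rw [malcev, malcev, O.inner_sub_left, O.inner_sub_right,
    O.inner_mul_of_inner_left_e_eq_zero hx, O.inner_mul_of_inner_right_e_eq_zero hx]
  ring

lemma inner_assoc_of_inner_e_eq_zero {a b : A} (ha : O.inner a O.e = 0)
    (hb : O.inner b O.e = 0) (x c : A) :
    O.inner (O.assoc a x b) c = O.inner (O.mul a b) (O.malcev c x)
      + O.inner a x * O.inner b c - O.inner b x * O.inner a c := by
  have hr := O.inner_mul_mul_add_inner_mul_mul_swap_right a x c b
  have hl := O.inner_mul_mul_add_inner_mul_mul_swap_left x b a c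
  rw [assoc, malcev, O.inner_sub_left, O.inner_sub_right,
    O.inner_mul_of_inner_right_e_eq_zero hb (O.mul a x),
    O.inner_mul_of_inner_left_e_eq_zero ha (O.mul x b)]
  rw [O.inner_comm x a] at hl
  rw [O.inner_comm x b] at hr
  linear_combination hl - hr

end OctonionAlgebra

/-- For pure octonions `a, b, x`:
`{a,x,b} = (1/2) x*(a*b) + ⟨a,x⟩b - ⟨b,x⟩a`. -/
theorem stmt2 {k A : Type} [Field k] [AddCommGroup A] [Module k A]
    (h2 : (2 : k) ≠ 0) (O : OctonionAlgebra k A) :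
    ∀ a b x : A, O.inner a O.e = 0 → O.inner b O.e = 0 → O.inner x O.e = 0 →
      O.assoc a x b
        = (2 : k)⁻¹ • O.malcev x (O.malcev a b) + O.inner a x • b - O.inner b x • a := by
  intro a b x ha hb hx
  rw [← sub_eq_zero]
  refine O.eq_zero_of_forall_inner_eq_zero fun c => ?_
  have hcx := O.inner_malcev_e c x
  rw [O.inner_sub_left, O.inner_sub_left, O.inner_add_left, O.inner_smul_left,
    O.inner_smul_left, O.inner_smul_left, O.inner_assoc_of_inner_e_eq_zero ha hb,
    O.inner_malcev_left_of_inner_e_eq_zero hx, O.inner_malcev_of_inner_e_eq_zero ha hb hcx,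
    O.inner_comm b c, O.inner_comm a c]
  field_simp
  ring
end

section
/- Let B be an orthonormal basis (with respect to the trace form) of the trace-zero part W of an Albert algebra over an algebraically closed field, with projected product *. Assume ∑_{x∈B} x*x = 0. Then for all a, c ∈ W: ∑_{x∈B} (a*x)*(c*x) + a*c = 0. -/
/-- An Albert algebra over `k`: a 27-dimensional commutative unital Jordan `k`-algebra of
degree 3, with trace bilinear form `inner`, and symmetric trilinear form `tri` (the full
polarization of the cubic norm form), satisfying the generic degree-3 equation. -/
structure AlbertAlgebra (k : Type) [Field k] (A : Type) [AddCommGroup A] [Module k A] where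
  mul : A → A → A
  e : A
  inner : A → A → k
  tri : A → A → A → k
  mul_comm' : ∀ a b : A, mul a b = mul b a
  add_mul' : ∀ a b c : A, mul (a + b) c = mul a c + mul b c
  smul_mul' : ∀ (t : k) (a b : A), mul (t • a) b = t • mul a b
  one_mul' : ∀ a : A, mul e a = a
  inner_comm' : ∀ a b : A, inner a b = inner b a
  inner_add_left : ∀ a b c : A, inner (a + b) c = inner a c + inner b c
  inner_smul_left : ∀ (t : k) (a b : A), inner (t • a) b = t * inner a b
  nondeg : ∀ a : A, (∀ b : A, inner a b = 0) → a = 0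
  inner_assoc : ∀ x y z : A, inner (mul x y) z = inner x (mul y z)
  jordan : ∀ x y : A, mul (mul x y) (mul x x) = mul x (mul y (mul x x))
  tri_add_left : ∀ a a' b c : A, tri (a + a') b c = tri a b c + tri a' b c
  tri_smul_left : ∀ (t : k) (a b c : A), tri (t • a) b c = t * tri a b c
  tri_comm₁ : ∀ a b c : A, tri a b c = tri b a c
  tri_comm₂ : ∀ a b c : A, tri a b c = tri a c b
  dim_eq : Module.finrank k A = 27
  inner_e_e : inner e e = 3
  cube : ∀ x : A, mul x (mul x x)
    = inner x e • mul x x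
      + ((2 : k)⁻¹ * (inner x x - inner x e * inner x e)) • x
      + tri x x x • e

namespace AlbertAlgebra

variable {k : Type} [Field k] {A : Type} [AddCommGroup A] [Module k A]

/-- The standard derivation `D_{a,b} = [L_a,L_b]` of a Jordan algebra, as a function. -/
def D (J : AlbertAlgebra k A) (a b x : A) : A := J.mul a (J.mul b x) - J.mul b (J.mul a x)

/-- Projection to the trace-zero part along the unit: `π(a) = a - (⟨a,e⟩/3)e`. -/
def proj (J : AlbertAlgebra k A) (a : A) : A := a - ((3 : k)⁻¹ * J.inner a J.e) • J.e

/-- The projected Jordan product on the trace-zero part: `x*y = π(x·y)`. -/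
def star (J : AlbertAlgebra k A) (x y : A) : A := J.proj (J.mul x y)

end AlbertAlgebra

/-!
On the trace-zero part `W` the degree-3 equation reduces to `x * (x * x) = ⟨x, x⟩ x / 6`, and
its linearization
`a * (c * d) + c * (a * d) + d * (a * c) = (⟨c, d⟩ a + ⟨a, d⟩ c + ⟨a, c⟩ d) / 6`
is the only algebraic input. Instantiating it at basis vectors `x` and summing, with Parseval,
the invariance `⟨x * y, z⟩ = ⟨x, y * z⟩` and `∑ x * x = 0`, gives
`∑ (m * x) * x = (n + 2) m / 12` for a basis of size `n`, together with two linear relations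
between `∑ (a * x) * (c * x)` and the sums `∑ (a * (c * x)) * x`, `∑ (c * (a * x)) * x`.
Eliminating the latter two leaves `24 ∑ (a * x) * (c * x) = (2 - n) a * c`, and `n = 26`.
-/

namespace AlbertAlgebra

variable {k : Type} [Field k] {A : Type} [AddCommGroup A] [Module k A] (J : AlbertAlgebra k A)

theorem mul_add_right (a b c : A) : J.mul a (b + c) = J.mul a b + J.mul a c := by
  rw [J.mul_comm', J.add_mul', J.mul_comm' b, J.mul_comm' c]

theorem mul_e (a : A) : J.mul a J.e = a := by
  rw [J.mul_comm', J.one_mul']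

theorem inner_add_right (a b c : A) : J.inner a (b + c) = J.inner a b + J.inner a c := by
  rw [J.inner_comm', J.inner_add_left, J.inner_comm' b, J.inner_comm' c]

theorem inner_smul_right (t : k) (a b : A) : J.inner a (t • b) = t * J.inner a b := by
  rw [J.inner_comm', J.inner_smul_left, J.inner_comm']

theorem inner_zero_right (a : A) : J.inner a 0 = 0 := by
  simpa using J.inner_smul_right 0 a 0

theorem inner_sub_left (a b c : A) : J.inner (a - b) c = J.inner a c - J.inner b c := by
  rw [sub_eq_add_neg, ← neg_one_smul k, J.inner_add_left, J.inner_smul_left]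
  ring

theorem inner_sub_right (a b c : A) : J.inner a (b - c) = J.inner a b - J.inner a c := by
  rw [J.inner_comm', J.inner_sub_left, J.inner_comm' b, J.inner_comm' c]

theorem inner_sum_left {ι : Type*} (s : Finset ι) (f : ι → A) (w : A) :
    J.inner (∑ i ∈ s, f i) w = ∑ i ∈ s, J.inner (f i) w :=
  map_sum (AddMonoidHom.mk' (J.inner · w) (J.inner_add_left · · w)) f s

theorem inner_sum_right {ι : Type*} (s : Finset ι) (f : ι → A) (w : A) :
    J.inner w (∑ i ∈ s, f i) = ∑ i ∈ s, J.inner w (f i) :=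
  map_sum (AddMonoidHom.mk' (J.inner w ·) (J.inner_add_right w)) f s

theorem inner_mul_e (a b : A) : J.inner (J.mul a b) J.e = J.inner a b := by
  rw [J.inner_assoc, J.mul_e]

theorem proj_add (x y : A) : J.proj (x + y) = J.proj x + J.proj y := by
  simp only [proj, J.inner_add_left]
  module

theorem proj_smul (t : k) (x : A) : J.proj (t • x) = t • J.proj x := by
  simp only [proj, J.inner_smul_left]
  module

theorem proj_of_inner_e {x : A} (hx : J.inner x J.e = 0) : J.proj x = x := by
  simp [proj, hx]

theorem proj_e (h3 : (3 : k) ≠ 0) : J.proj J.e = 0 := by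
  simp [proj, J.inner_e_e, h3]

theorem inner_proj_e (h3 : (3 : k) ≠ 0) (x : A) : J.inner (J.proj x) J.e = 0 := by
  rw [proj, J.inner_sub_left, J.inner_smul_left, J.inner_e_e]
  field_simp
  ring

theorem star_comm (x y : A) : J.star x y = J.star y x := by
  rw [star, J.mul_comm', star]

theorem star_eq (x y : A) : J.star x y = J.mul x y - ((3 : k)⁻¹ * J.inner x y) • J.e := by
  rw [star, proj, J.inner_mul_e]

theorem inner_star_e (h3 : (3 : k) ≠ 0) (x y : A) : J.inner (J.star x y) J.e = 0 :=
  J.inner_proj_e h3 _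

theorem star_add_left (x y z : A) : J.star (x + y) z = J.star x z + J.star y z := by
  rw [star, J.add_mul', J.proj_add, star, star]

theorem star_add_right (x y z : A) : J.star x (y + z) = J.star x y + J.star x z := by
  rw [J.star_comm, J.star_add_left, J.star_comm y, J.star_comm z]

theorem star_smul_left (t : k) (x y : A) : J.star (t • x) y = t • J.star x y := by
  rw [star, J.smul_mul', J.proj_smul, star]

theorem star_smul_right (t : k) (x y : A) : J.star x (t • y) = t • J.star x y := by
  rw [J.star_comm, J.star_smul_left, J.star_comm]

theorem star_sub_right (x y z : A) : J.star x (y - z) = J.star x y - J.star x z := by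
  rw [sub_eq_add_neg, ← neg_one_smul k, J.star_add_right, J.star_smul_right]
  module

theorem star_zero_right (x : A) : J.star x 0 = 0 := by
  simpa using J.star_smul_right 0 x 0

theorem star_sum_right {ι : Type*} (s : Finset ι) (f : ι → A) (w : A) :
    J.star w (∑ i ∈ s, f i) = ∑ i ∈ s, J.star w (f i) :=
  map_sum (AddMonoidHom.mk' (J.star w ·) (J.star_add_right w)) f s

theorem star_e {a : A} (ha : J.inner a J.e = 0) : J.star a J.e = a := by
  rw [star, J.mul_e, J.proj_of_inner_e ha]

variable {J}

theorem inner_star_left {x z : A} (hx : J.inner x J.e = 0) (hz : J.inner z J.e = 0) (y : A) :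
    J.inner (J.star x y) z = J.inner x (J.star y z) := by
  rw [J.star_eq, J.star_eq, J.inner_sub_left, J.inner_sub_right, J.inner_smul_left,
    J.inner_smul_right, J.inner_comm' J.e z, hz, hx, J.inner_assoc]
  ring

theorem two_smul_proj_mul_mul_self (h2 : (2 : k) ≠ 0) (h3 : (3 : k) ≠ 0) {x : A}
    (hx : J.inner x J.e = 0) :
    (2 : k) • J.proj (J.mul x (J.mul x x)) = J.inner x x • x := by
  rw [J.cube, J.proj_add, J.proj_add, J.proj_smul, J.proj_smul, J.proj_smul,
    J.proj_of_inner_e hx, J.proj_e h3, hx, smul_zero]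
  simp [smul_smul, h2]

theorem two_smul_proj_polarized (h2 : (2 : k) ≠ 0) (h3 : (3 : k) ≠ 0) {a c d : A}
    (ha : J.inner a J.e = 0) (hc : J.inner c J.e = 0) (hd : J.inner d J.e = 0) :
    (2 : k) • (J.proj (J.mul a (J.mul c d)) + J.proj (J.mul c (J.mul a d))
        + J.proj (J.mul d (J.mul a c)))
      = J.inner c d • a + J.inner a d • c + J.inner a c • d := by
  have traceless : ∀ {x y : A}, J.inner x J.e = 0 → J.inner y J.e = 0 →
      J.inner (x + y) J.e = 0 := fun hx hy => by rw [J.inner_add_left, hx, hy, add_zero]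
  have Eacd := two_smul_proj_mul_mul_self h2 h3 (traceless (traceless ha hc) hd)
  have Eac := two_smul_proj_mul_mul_self h2 h3 (traceless ha hc)
  have Ead := two_smul_proj_mul_mul_self h2 h3 (traceless ha hd)
  have Ecd := two_smul_proj_mul_mul_self h2 h3 (traceless hc hd)
  have Ea := two_smul_proj_mul_mul_self h2 h3 ha
  have Ec := two_smul_proj_mul_mul_self h2 h3 hc
  have Ed := two_smul_proj_mul_mul_self h2 h3 hd
  simp only [J.add_mul', J.mul_add_right, J.proj_add, J.inner_add_left, J.inner_add_right]
    at Eacd Eac Ead Ecd Ea Ec Ed ⊢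
  simp only [J.mul_comm' c a, J.mul_comm' d a, J.mul_comm' d c, J.inner_comm' c a,
    J.inner_comm' d a, J.inner_comm' d c] at Eacd Eac Ead Ecd
  rw [← smul_right_inj h2]
  -- inclusion-exclusion extracts the trilinear part of the cubic `2 π(x (x x)) - ⟨x, x⟩ x`
  linear_combination (norm := module) Eacd - Eac - Ead - Ecd + Ea + Ec + Ed

theorem three_smul_star_star (h3 : (3 : k) ≠ 0) {a : A} (ha : J.inner a J.e = 0) (c d : A) :
    (3 : k) • J.star a (J.star c d)
      = (3 : k) • J.proj (J.mul a (J.mul c d)) - J.inner c d • a := by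
  rw [J.star_eq c d, J.star_sub_right, J.star_smul_right, J.star_e ha, star, smul_sub, smul_smul,
    mul_inv_cancel_left₀ h3]

theorem six_smul_star_star_polarized (h2 : (2 : k) ≠ 0) (h3 : (3 : k) ≠ 0) {a c d : A}
    (ha : J.inner a J.e = 0) (hc : J.inner c J.e = 0) (hd : J.inner d J.e = 0) :
    (6 : k) • (J.star a (J.star c d) + J.star c (J.star a d) + J.star d (J.star a c))
      = J.inner c d • a + J.inner a d • c + J.inner a c • d := by
  have Sa := three_smul_star_star h3 ha c d
  have Sc := three_smul_star_star h3 hc a d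
  have Sd := three_smul_star_star h3 hd a c
  have P := two_smul_proj_polarized h2 h3 ha hc hd
  linear_combination (norm := module) (2 : k) • (Sa + Sc + Sd) + (3 : k) • P

section Basis

variable {ι : Type*} [DecidableEq ι]

structure IsTracelessOrthonormalBasis (J : AlbertAlgebra k A) (b : ι → A) : Prop where
  inner_e : ∀ i, J.inner (b i) J.e = 0
  inner_eq : ∀ i j, J.inner (b i) (b j) = if i = j then 1 else 0
  mem_span : ∀ x, J.inner x J.e = 0 → x ∈ Submodule.span k (Set.range b)

variable {b : ι → A}

theorem IsTracelessOrthonormalBasis.eq_zero (h3 : (3 : k) ≠ 0)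
    (hb : IsTracelessOrthonormalBasis J b) {u : A} (hu : J.inner u J.e = 0)
    (hub : ∀ i, J.inner u (b i) = 0) : u = 0 := by
  have hspan : ∀ v ∈ Submodule.span k (Set.range b), J.inner u v = 0 := by
    intro v hv
    induction hv using Submodule.span_induction with
    | mem x hx => obtain ⟨i, rfl⟩ := hx; exact hub i
    | zero => exact J.inner_zero_right u
    | add x y _ _ hx hy => rw [J.inner_add_right, hx, hy, add_zero]
    | smul t x _ hx => rw [J.inner_smul_right, hx, mul_zero]
  refine J.nondeg u fun w => ?_
  rw [← sub_add_cancel w (((3 : k)⁻¹ * J.inner w J.e) • J.e), J.inner_add_right,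
    J.inner_smul_right, hu, mul_zero, add_zero]
  exact hspan _ (hb.mem_span _ (J.inner_proj_e h3 w))

variable [Fintype ι]

theorem IsTracelessOrthonormalBasis.sum_inner_smul (h3 : (3 : k) ≠ 0)
    (hb : IsTracelessOrthonormalBasis J b) {u : A} (hu : J.inner u J.e = 0) :
    ∑ i, J.inner u (b i) • b i = u := by
  refine sub_eq_zero.mp (hb.eq_zero h3 ?_ fun j => ?_)
  · simp [J.inner_sub_left, J.inner_sum_left, J.inner_smul_left, hb.inner_e, hu]
  · simp [J.inner_sub_left, J.inner_sum_left, J.inner_smul_left, hb.inner_eq]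

theorem IsTracelessOrthonormalBasis.twelve_smul_sum_star_star_self (h2 : (2 : k) ≠ 0)
    (h3 : (3 : k) ≠ 0) (hb : IsTracelessOrthonormalBasis J b)
    (hsum : ∑ i, J.star (b i) (b i) = 0) {m : A} (hm : J.inner m J.e = 0) :
    (12 : k) • ∑ i, J.star (J.star m (b i)) (b i) = ((Fintype.card ι : k) + 2) • m := by
  have key : ∀ i, (12 : k) • J.star (J.star m (b i)) (b i)
        + (6 : k) • J.star m (J.star (b i) (b i))
      = m + (2 : k) • (J.inner m (b i) • b i) := by
    intro i
    have P := six_smul_star_star_polarized h2 h3 hm (hb.inner_e i) (hb.inner_e i)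
    rw [hb.inner_eq, if_pos rfl, J.star_comm (b i) (J.star m (b i))] at P
    linear_combination (norm := module) P
  calc (12 : k) • ∑ i, J.star (J.star m (b i)) (b i)
      = ∑ i, ((12 : k) • J.star (J.star m (b i)) (b i)
          + (6 : k) • J.star m (J.star (b i) (b i))) := by
        rw [Finset.sum_add_distrib, ← Finset.smul_sum, ← Finset.smul_sum, ← J.star_sum_right,
          hsum, J.star_zero_right, smul_zero, add_zero]
    _ = ∑ i, (m + (2 : k) • (J.inner m (b i) • b i)) := Finset.sum_congr rfl fun i _ => key i
    _ = ((Fintype.card ι : k) + 2) • m := by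
        rw [Finset.sum_add_distrib, ← Finset.smul_sum, hb.sum_inner_smul h3 hm, Finset.sum_const,
          add_smul, Finset.card_univ, Nat.cast_smul_eq_nsmul]

theorem IsTracelessOrthonormalBasis.six_smul_star_sum_add_sum (h2 : (2 : k) ≠ 0)
    (h3 : (3 : k) ≠ 0) (hb : IsTracelessOrthonormalBasis J b)
    (hsum : ∑ i, J.star (b i) (b i) = 0) {p q : A} (hp : J.inner p J.e = 0)
    (hq : J.inner q J.e = 0) :
    (6 : k) • (J.star p (∑ i, J.star (J.star q (b i)) (b i))
        + ∑ i, J.star (J.star p (b i)) (J.star q (b i))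
        + ∑ i, J.star (J.star p (J.star q (b i))) (b i)) = (2 : k) • J.star p q := by
  have key : ∀ i, (6 : k) • (J.star p (J.star (J.star q (b i)) (b i))
        + J.star (J.star p (b i)) (J.star q (b i)) + J.star (J.star p (J.star q (b i))) (b i))
      = J.inner q (J.star (b i) (b i)) • p + J.star q (J.inner p (b i) • b i)
        + J.inner (J.star p q) (b i) • b i := by
    intro i
    have P := six_smul_star_star_polarized h2 h3 hp (J.inner_star_e h3 q (b i)) (hb.inner_e i)
    rwa [J.star_comm (J.star q (b i)) (J.star p (b i)), J.star_comm (b i),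
      inner_star_left hq (hb.inner_e i), ← inner_star_left hp (hb.inner_e i),
      ← J.star_smul_right] at P
  have := Finset.sum_congr rfl fun i (_ : i ∈ Finset.univ) => key i
  simp only [Finset.sum_add_distrib, ← Finset.smul_sum, ← Finset.sum_smul, ← J.star_sum_right,
    ← J.inner_sum_right, hsum, hb.sum_inner_smul h3 hp,
    hb.sum_inner_smul h3 (J.inner_star_e h3 p q)] at this
  rw [this, J.inner_zero_right, zero_smul, zero_add, J.star_comm q, two_smul]

theorem IsTracelessOrthonormalBasis.six_smul_sum_star_star_add (h2 : (2 : k) ≠ 0)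
    (h3 : (3 : k) ≠ 0) (hb : IsTracelessOrthonormalBasis J b)
    (hsum : ∑ i, J.star (b i) (b i) = 0) {a c : A} (ha : J.inner a J.e = 0)
    (hc : J.inner c J.e = 0) :
    (6 : k) • (∑ i, J.star (J.star a (J.star c (b i))) (b i)
        + ∑ i, J.star (J.star c (J.star a (b i))) (b i)
        + ∑ i, J.star (J.star (J.star a c) (b i)) (b i)) = (2 : k) • J.star a c := by
  have key : ∀ i, (6 : k) • (J.star (J.star a (J.star c (b i))) (b i)
        + J.star (J.star c (J.star a (b i))) (b i) + J.star (J.star (J.star a c) (b i)) (b i))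
      = J.star a (J.inner c (b i) • b i) + J.star c (J.inner a (b i) • b i)
        + J.inner a c • J.star (b i) (b i) := by
    intro i
    have P := congrArg (J.star · (b i)) (six_smul_star_star_polarized h2 h3 ha hc (hb.inner_e i))
    simpa only [J.star_smul_left, J.star_add_left, J.star_comm (b i) (J.star a c),
      J.star_smul_right] using P
  have := Finset.sum_congr rfl fun i (_ : i ∈ Finset.univ) => key i
  simp only [Finset.sum_add_distrib, ← Finset.smul_sum, ← J.star_sum_right, hsum,
    hb.sum_inner_smul h3 ha, hb.sum_inner_smul h3 hc] at this
  rw [this, smul_zero, add_zero, J.star_comm c, two_smul]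

theorem IsTracelessOrthonormalBasis.twenty_four_smul_sum_star_star_add (h2 : (2 : k) ≠ 0)
    (h3 : (3 : k) ≠ 0) (hb : IsTracelessOrthonormalBasis J b)
    (hsum : ∑ i, J.star (b i) (b i) = 0) {a c : A} (ha : J.inner a J.e = 0)
    (hc : J.inner c J.e = 0) :
    (24 : k) • ∑ i, J.star (J.star a (b i)) (J.star c (b i))
      + ((Fintype.card ι : k) - 2) • J.star a c = 0 := by
  have Aac := hb.six_smul_star_sum_add_sum h2 h3 hsum ha hc
  have Aca := hb.six_smul_star_sum_add_sum h2 h3 hsum hc ha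
  have B := hb.six_smul_sum_star_star_add h2 h3 hsum ha hc
  have Qa := congrArg (J.star c) (hb.twelve_smul_sum_star_star_self h2 h3 hsum ha)
  have Qc := congrArg (J.star a) (hb.twelve_smul_sum_star_star_self h2 h3 hsum hc)
  have Qac := hb.twelve_smul_sum_star_star_self h2 h3 hsum (J.inner_star_e h3 a c)
  simp only [J.star_smul_right, J.star_comm c a, J.star_comm (J.star c _) (J.star a _)]
    at Aca Qa Qc
  linear_combination (norm := module) (2 : k) • (Aac + Aca - B) - Qa - Qc + Qac

end Basis

end AlbertAlgebra

theorem stmt18_general {k A : Type} [Field k] [AddCommGroup A] [Module k A]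
    (h2 : (2 : k) ≠ 0) (h3 : (3 : k) ≠ 0) (J : AlbertAlgebra k A)
    (b : Fin 26 → A)
    (hpure : ∀ i, J.inner (b i) J.e = 0)
    (horth : ∀ i j, J.inner (b i) (b j) = if i = j then 1 else 0)
    (hspan : ∀ x : A, J.inner x J.e = 0 → x ∈ Submodule.span k (Set.range b))
    (hsum : ∑ i : Fin 26, J.star (b i) (b i) = 0) :
    ∀ a c : A, J.inner a J.e = 0 → J.inner c J.e = 0 →
      (∑ i : Fin 26, J.star (J.star a (b i)) (J.star c (b i))) + J.star a c = 0 := by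
  intro a c ha hc
  have hb : J.IsTracelessOrthonormalBasis b := ⟨hpure, horth, hspan⟩
  have h24 : (24 : k) ≠ 0 := by
    have : (24 : k) = 2 * 2 * 2 * 3 := by norm_num
    rw [this]
    exact mul_ne_zero (mul_ne_zero (mul_ne_zero h2 h2) h2) h3
  have key := hb.twenty_four_smul_sum_star_star_add h2 h3 hsum ha hc
  norm_num only [Fintype.card_fin, ← smul_add, smul_eq_zero, h24, false_or] at key
  exact key

/-- Let `B` be an orthonormal basis (for the trace form) of the trace-zero part of an
Albert algebra over an algebraically closed field, with projected product `*`, such that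
`∑_{x∈B} x*x = 0`. Then for all trace-zero `a, c`: `∑_{x∈B} (a*x)*(c*x) + a*c = 0`. -/
theorem stmt18 {k A : Type} [Field k] [IsAlgClosed k] [AddCommGroup A] [Module k A]
    (h2 : (2 : k) ≠ 0) (h3 : (3 : k) ≠ 0) (J : AlbertAlgebra k A)
    (b : Fin 26 → A)
    (hpure : ∀ i, J.inner (b i) J.e = 0)
    (horth : ∀ i j, J.inner (b i) (b j) = if i = j then 1 else 0)
    (hspan : ∀ x : A, J.inner x J.e = 0 → x ∈ Submodule.span k (Set.range b))
    (hsum : ∑ i : Fin 26, J.star (b i) (b i) = 0) :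
    ∀ a c : A, J.inner a J.e = 0 → J.inner c J.e = 0 →
      (∑ i : Fin 26, J.star (J.star a (b i)) (J.star c (b i))) + J.star a c = 0 :=
  stmt18_general h2 h3 J b hpure horth hspan hsum
end
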